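/- Block Baillon–Haddad: for a convex and continuously differentiable f : ℝ^n → ℝ and L_i > 0, the block gradient ∇_i f is block L_i-Lipschitz continuous if and only if ∇_i f is block (1/L_i)-cocoercive. -/

import Mathlib

/-!
Fix `y` and restrict `f` to the affine slice `k ↦ f (y + U_i k)`: it is convex, its gradient is
`∇_i f (y + U_i k)`, and block Lipschitz continuity of `∇_i f` is plain Lipschitz continuity of
that gradient. So the forward direction is the classical Baillon–Haddad theorem on `ℝ^{n_i}`:
comparing the descent lemma at `y` with first-order convexity at `x`, both evaluated at the
gradient step `z = y - (∇f y - ∇f x) / L`, gives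
`f x + ⟪∇f x, y - x⟫ + ‖∇f y - ∇f x‖² / (2L) ≤ f y`, and adding this to the same inequality with
`x` and `y` swapped yields cocoercivity. The converse is Cauchy–Schwarz.
-/

open scoped RealInnerProductSpace BigOperators

noncomputable section

/-- The `i`-th block of `ℝ^n = ℝ^{n 0} × ⋯ × ℝ^{n (b-1)}`. -/
abbrev Blk {b : ℕ} (n : Fin b → ℕ) (i : Fin b) := EuclideanSpace ℝ (Fin (n i))

/-- The full space `ℝ^n` decomposed into `b` blocks. -/
abbrev FullSpace {b : ℕ} (n : Fin b → ℕ) := PiLp 2 fun i => Blk n i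

/-- `U_i : ℝ^{n_i} → ℝ^n`, the injection of the `i`-th block (zero elsewhere). -/
noncomputable def blockInj {b : ℕ} (n : Fin b → ℕ) (i : Fin b) (h : Blk n i) :
    FullSpace n := WithLp.toLp 2 (Pi.single i h)

/-- `U_iᵀ : ℝ^n → ℝ^{n_i}`, extraction of the `i`-th block. -/
def blockExt {b : ℕ} (n : Fin b → ℕ) (i : Fin b) (x : FullSpace n) : Blk n i := x i

/-- `T_i : ℝ^n → ℝ^{n_i}` is block Lipschitz continuous with constant `lam`:
`‖T_i(y + U_i h) − T_i(y)‖ ≤ lam * ‖h‖` for all `y ∈ ℝ^n`, `h ∈ ℝ^{n_i}`.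
Block nonexpansive means `lam = 1`. -/
def BlockLipschitz {b : ℕ} (n : Fin b → ℕ) (i : Fin b)
    (T : FullSpace n → Blk n i) (lam : ℝ) : Prop :=
  ∀ (y : FullSpace n) (h : Blk n i), ‖T (y + blockInj n i h) - T y‖ ≤ lam * ‖h‖

/-- `T_i : ℝ^n → ℝ^{n_i}` is block `β`-cocoercive:
`⟨T_i(y + U_i h) − T_i(y), h⟩ ≥ β‖T_i(y + U_i h) − T_i(y)‖²`. -/
def BlockCocoercive {b : ℕ} (n : Fin b → ℕ) (i : Fin b)
    (T : FullSpace n → Blk n i) (β : ℝ) : Prop :=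
  ∀ (y : FullSpace n) (h : Blk n i),
    β * ‖T (y + blockInj n i h) - T y‖ ^ 2 ≤ ⟪T (y + blockInj n i h) - T y, h⟫


section BaillonHaddad

variable {E : Type*} [NormedAddCommGroup E] [InnerProductSpace ℝ E] {L : ℝ}

theorem norm_le_mul_of_one_div_mul_sq_le_inner {d h : E} (hL : 0 < L)
    (hdh : 1 / L * ‖d‖ ^ 2 ≤ ⟪d, h⟫) : ‖d‖ ≤ L * ‖h‖ := by
  have hsq : ‖d‖ * ‖d‖ ≤ ‖d‖ * (L * ‖h‖) := by
    have hcs := hdh.trans (real_inner_le_norm d h)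
    rw [div_mul_eq_mul_div, one_mul, div_le_iff₀ hL] at hcs
    nlinarith
  rcases (norm_nonneg d).eq_or_lt with hd | hd
  · rw [← hd]; positivity
  · exact le_of_mul_le_mul_left hsq hd

variable [CompleteSpace E] {f : E → ℝ} {g : E → E}

theorem HasGradientAt.hasDerivAt_comp_lineMap {g' x y : E} {t : ℝ}
    (hf : HasGradientAt f g' (AffineMap.lineMap x y t)) :
    HasDerivAt (f ∘ AffineMap.lineMap x y) ⟪g', y - x⟫ t := by
  simpa using (hasGradientAt_iff_hasFDerivAt.mp hf).comp_hasDerivAt t AffineMap.hasDerivAt_lineMap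

theorem ConvexOn.add_inner_le_of_hasGradientAt (hconv : ConvexOn ℝ Set.univ f) {g' x : E}
    (hf : HasGradientAt f g' x) (y : E) : f x + ⟪g', y - x⟫ ≤ f y := by
  have hslope := (hconv.comp_affineMap (AffineMap.lineMap x y)).le_slope_of_hasDerivAt
    (Set.mem_univ 0) (Set.mem_univ 1) one_pos
    (HasGradientAt.hasDerivAt_comp_lineMap (t := 0) (by simpa using hf))
  simp only [slope_def_field, Function.comp_apply, AffineMap.lineMap_apply_zero,
    AffineMap.lineMap_apply_one, sub_zero, div_one] at hslope
  linarith

theorem sub_sub_inner_le_of_lipschitz_gradient (hg : ∀ x, HasGradientAt f (g x) x)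
    (hlip : ∀ x y, ‖g y - g x‖ ≤ L * ‖y - x‖) (x y : E) :
    f y - f x - ⟪g x, y - x⟫ ≤ L / 2 * ‖y - x‖ ^ 2 := by
  set ψ : ℝ → ℝ := fun t =>
    f (AffineMap.lineMap x y t) - t * ⟪g x, y - x⟫ - L / 2 * t ^ 2 * ‖y - x‖ ^ 2
  have hψ (t : ℝ) :
      HasDerivAt ψ (⟪g (AffineMap.lineMap x y t) - g x, y - x⟫ - L * t * ‖y - x‖ ^ 2) t := by
    have := (((hg (AffineMap.lineMap x y t)).hasDerivAt_comp_lineMap).sub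
      ((hasDerivAt_id t).mul_const ⟪g x, y - x⟫)).sub
      (((hasDerivAt_pow 2 t).const_mul (L / 2)).mul_const (‖y - x‖ ^ 2))
    exact this.congr_deriv (by rw [inner_sub_left]; ring)
  have hanti : AntitoneOn ψ (Set.Icc 0 1) := by
    refine antitoneOn_of_hasDerivWithinAt_nonpos (convex_Icc 0 1)
      (HasDerivAt.continuousOn fun t _ => hψ t) (fun t _ => (hψ t).hasDerivWithinAt) ?_
    intro t ht
    rw [interior_Icc] at ht
    have hinner : ⟪g (AffineMap.lineMap x y t) - g x, y - x⟫ ≤ L * t * ‖y - x‖ ^ 2 :=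
      calc _ ≤ ‖g (AffineMap.lineMap x y t) - g x‖ * ‖y - x‖ := real_inner_le_norm _ _
        _ ≤ L * ‖AffineMap.lineMap x y t - x‖ * ‖y - x‖ := by gcongr; exact hlip _ _
        _ = L * t * ‖y - x‖ ^ 2 := by
          rw [AffineMap.lineMap_apply_module', add_sub_cancel_right, norm_smul,
            Real.norm_of_nonneg ht.1.le]
          ring
    linarith
  have hendpoints := hanti (Set.left_mem_Icc.mpr zero_le_one)
    (Set.right_mem_Icc.mpr zero_le_one) zero_le_one
  simp only [ψ, AffineMap.lineMap_apply_zero, AffineMap.lineMap_apply_one] at hendpoints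
  linarith

theorem ConvexOn.add_inner_add_sq_le_of_lipschitz_gradient (hconv : ConvexOn ℝ Set.univ f)
    (hL : 0 < L) (hg : ∀ x, HasGradientAt f (g x) x) (hlip : ∀ x y, ‖g y - g x‖ ≤ L * ‖y - x‖)
    (x y : E) : f x + ⟪g x, y - x⟫ + 1 / (2 * L) * ‖g y - g x‖ ^ 2 ≤ f y := by
  set w := g y - g x
  set z := y - L⁻¹ • w
  have hdescent := sub_sub_inner_le_of_lipschitz_gradient hg hlip y z
  have hfirst := hconv.add_inner_le_of_hasGradientAt (hg x) z
  have hzy : z - y = -(L⁻¹ • w) := by simp [z]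
  have hzx : z - x = (y - x) - L⁻¹ • w := by simp only [z]; abel
  have hw : ⟪g y, w⟫ - ⟪g x, w⟫ = ‖w‖ ^ 2 := by
    rw [← inner_sub_left, real_inner_self_eq_norm_sq]
  rw [hzy, inner_neg_right, real_inner_smul_right, norm_neg, norm_smul,
    Real.norm_of_nonneg (inv_nonneg.mpr hL.le)] at hdescent
  rw [hzx, inner_sub_right, real_inner_smul_right] at hfirst
  have hquad : L / 2 * (L⁻¹ * ‖w‖) ^ 2 = 1 / (2 * L) * ‖w‖ ^ 2 := by field_simp
  have hcross : L⁻¹ * ⟪g y, w⟫ - L⁻¹ * ⟪g x, w⟫ = 2 * (1 / (2 * L)) * ‖w‖ ^ 2 := by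
    rw [← mul_sub, hw]; field_simp
  linarith

theorem ConvexOn.one_div_mul_sq_le_inner_of_lipschitz_gradient (hconv : ConvexOn ℝ Set.univ f)
    (hL : 0 < L) (hg : ∀ x, HasGradientAt f (g x) x) (hlip : ∀ x y, ‖g y - g x‖ ≤ L * ‖y - x‖)
    (x y : E) : 1 / L * ‖g y - g x‖ ^ 2 ≤ ⟪g y - g x, y - x⟫ := by
  have hxy := hconv.add_inner_add_sq_le_of_lipschitz_gradient hL hg hlip x y
  have hyx := hconv.add_inner_add_sq_le_of_lipschitz_gradient hL hg hlip y x
  rw [norm_sub_rev, ← neg_sub y x, inner_neg_right] at hyx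
  rw [inner_sub_left]
  have hhalf : 1 / L = 1 / (2 * L) + 1 / (2 * L) := by field_simp; norm_num
  rw [hhalf]
  linarith

end BaillonHaddad

def blockInjL {b : ℕ} (n : Fin b → ℕ) (i : Fin b) : Blk n i →L[ℝ] FullSpace n :=
  (PiLp.continuousLinearEquiv 2 ℝ (Blk n)).symm.toContinuousLinearMap ∘L
    ContinuousLinearMap.single ℝ (Blk n) i

section Blocks

variable {b : ℕ} (n : Fin b → ℕ) (i : Fin b)

@[simp] theorem blockInjL_apply (h : Blk n i) : blockInjL n i h = blockInj n i h := rfl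

theorem inner_blockInj (x : FullSpace n) (h : Blk n i) : ⟪x, blockInj n i h⟫ = ⟪x i, h⟫ := by
  rw [PiLp.inner_apply, Finset.sum_eq_single i]
  · simp [blockInj]
  · intro j _ hj
    simp [blockInj, Pi.single_eq_of_ne hj]
  · simp

variable {n i} {f : FullSpace n → ℝ}

theorem ConvexOn.comp_add_blockInj (hconv : ConvexOn ℝ Set.univ f) (y : FullSpace n) :
    ConvexOn ℝ Set.univ (fun k => f (y + blockInj n i k)) :=
  (hconv.translate_right y).comp_linearMap (blockInjL n i).toLinearMap

theorem DifferentiableAt.hasGradientAt_comp_add_blockInj {y : FullSpace n} {k : Blk n i}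
    (hf : DifferentiableAt ℝ f (y + blockInj n i k)) :
    HasGradientAt (fun k => f (y + blockInj n i k))
      (blockExt n i (gradient f (y + blockInj n i k))) k := by
  have hcomp := hf.hasGradientAt.hasFDerivAt.comp k ((blockInjL n i).hasFDerivAt.const_add y)
  refine hasGradientAt_iff_hasFDerivAt.mpr (hcomp.congr_fderiv ?_)
  ext k'
  simp only [ContinuousLinearMap.comp_apply, InnerProductSpace.toDual_apply_apply,
    blockInjL_apply, inner_blockInj, blockExt]

theorem BlockLipschitz.blockCocoercive_gradient (hconv : ConvexOn ℝ Set.univ f)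
    (hdiff : Differentiable ℝ f) {L : ℝ} (hL : 0 < L)
    (hlip : BlockLipschitz n i (fun x => blockExt n i (gradient f x)) L) :
    BlockCocoercive n i (fun x => blockExt n i (gradient f x)) (1 / L) := by
  intro y h
  set g := fun k => blockExt n i (gradient f (y + blockInj n i k))
  have hg (k : Blk n i) : HasGradientAt (fun k => f (y + blockInj n i k)) (g k) k :=
    (hdiff _).hasGradientAt_comp_add_blockInj
  have hglip (k k' : Blk n i) : ‖g k' - g k‖ ≤ L * ‖k' - k‖ := by
    have hstep := hlip (y + blockInj n i k) (k' - k)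
    rwa [add_assoc, ← blockInjL_apply, ← blockInjL_apply, ← map_add, add_sub_cancel] at hstep
  simpa [g, ← blockInjL_apply] using
    (hconv.comp_add_blockInj y).one_div_mul_sq_le_inner_of_lipschitz_gradient hL hg hglip 0 h

end Blocks

/-- block Baillon–Haddad: for convex continuously differentiable
`f`, the block gradient `∇_i f` is block `L_i`-Lipschitz iff it is block
`(1/L_i)`-cocoercive. -/
theorem block_baillon_haddad {b : ℕ} (n : Fin b → ℕ) (i : Fin b)
    (f : FullSpace n → ℝ) (hconv : ConvexOn ℝ Set.univ f)
    (hdiff : ContDiff ℝ 1 f) (Li : ℝ) (hLi : 0 < Li) :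
    BlockLipschitz n i (fun x => blockExt n i (gradient f x)) Li
      ↔ BlockCocoercive n i (fun x => blockExt n i (gradient f x)) (1 / Li) :=
  ⟨BlockLipschitz.blockCocoercive_gradient hconv (hdiff.differentiable one_ne_zero) hLi,
    fun hco y h => norm_le_mul_of_one_div_mul_sq_le_inner hLi (hco y h)⟩
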